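/- Let τ = {nop, inp, free} or τ = {nop, inp, used, free}, and let φ be a cubic monotone 3-CNF with m clauses. The TS A_φ is τ-feasible if and only if φ has a one-in-three model. -/

import Mathlib

/-! Boolean interactions -/

abbrev Interaction := Bool → Option Bool

def iNop : Interaction := fun b => some b
def iInp : Interaction := fun b => if b then some false else none
def iOut : Interaction := fun b => if b then none else some true
def iSet : Interaction := fun _ => some true
def iRes : Interaction := fun _ => some false
def iSwap : Interaction := fun b => some (!b)
def iUsed : Interaction := fun b => if b then some true else none
def iFree : Interaction := fun b => if b then none else some false

def allInteractions : Set Interaction :=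
  {iNop, iInp, iOut, iSet, iRes, iSwap, iUsed, iFree}

/-! Transition systems and regions -/

structure TS (S E : Type) where
  delta : S → E → Option S
  init : S

def IsRegion {S E : Type} (A : TS S E) (τ : Set Interaction)
    (sup : S → Bool) (sig : E → Interaction) : Prop :=
  (∀ e, sig e ∈ τ) ∧
  ∀ s e s', A.delta s e = some s' → sig e (sup s) = some (sup s')

def Separable {S E : Type} (A : TS S E) (τ : Set Interaction) (s s' : S) : Prop :=
  ∃ sup sig, IsRegion A τ sup sig ∧ sup s ≠ sup s'

def Inhibitable {S E : Type} (A : TS S E) (τ : Set Interaction) (e : E) (s : S) : Prop :=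
  ∃ sup sig, IsRegion A τ sup sig ∧ sig e (sup s) = none

def SSP {S E : Type} (A : TS S E) (τ : Set Interaction) : Prop :=
  ∀ s s' : S, s ≠ s' → Separable A τ s s'

def ESSP {S E : Type} (A : TS S E) (τ : Set Interaction) : Prop :=
  ∀ (s : S) (e : E), A.delta s e = none → Inhibitable A τ e s

def Feasible {S E : Type} (A : TS S E) (τ : Set Interaction) : Prop :=
  SSP A τ ∧ ESSP A τ

def Reachable {S E : Type} (A : TS S E) : Prop :=
  ∀ s : S, Relation.ReflTransGen (fun x y => ∃ e, A.delta x e = some y) A.init s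

/-! The TS A_φ for a cubic monotone 3-CNF φ with m clauses.  The clauses are
given by a map X : Fin m → Fin 3 → V listing the three variables X_{i,0},
X_{i,1}, X_{i,2} of every clause ζ_i. -/

inductive PState (m : ℕ) where
  | s0 | s1 | q
  | t (i : Fin m) (j : Fin 9)

inductive PEvent (m : ℕ) (V : Type) where
  | k | h
  | hc (i : Fin m)
  | r (i : Fin m)
  | var (v : V)

/-- The clause gadget of clause i: for each permutation (α, β, γ) of {0,1,2}
there is a path labeled X_{i,α}, X_{i,β}, X_{i,γ} from t_{i,0} to t_{i,5}. -/
def gadget {m : ℕ} {V : Type} [DecidableEq V] (X : Fin m → Fin 3 → V)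
    (i : Fin m) (j : Fin 9) (v : V) : Option (PState m) :=
  if j = 0 then
    if v = X i 0 then some (.t i 1)
    else if v = X i 1 then some (.t i 7)
    else if v = X i 2 then some (.t i 3) else none
  else if j = 1 then
    if v = X i 1 then some (.t i 2)
    else if v = X i 2 then some (.t i 4) else none
  else if j = 2 then
    if v = X i 2 then some (.t i 5) else none
  else if j = 3 then
    if v = X i 0 then some (.t i 4)
    else if v = X i 1 then some (.t i 6) else none
  else if j = 4 then
    if v = X i 1 then some (.t i 5) else none
  else if j = 6 then
    if v = X i 0 then some (.t i 5) else none
  else if j = 7 then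
    if v = X i 0 then some (.t i 2)
    else if v = X i 2 then some (.t i 6) else none
  else none

def Aphi {m : ℕ} {V : Type} [DecidableEq V] (X : Fin m → Fin 3 → V) :
    TS (PState m) (PEvent m V) where
  delta := fun s e =>
    match s, e with
    | .s0, .k => some .s1
    | .s0, .h => some .q
    | .s0, .r i => some (.t i 0)
    | .s1, .r i => some (.t i 8)
    | .q, .hc i => some (.t i 5)
    | .t i j, .k => if j = 0 then some (.t i 8) else none
    | .t i j, .var v => gadget X i j v
    | _, _ => none
  init := .s0

/-- φ is a cubic monotone 3-CNF: each clause consists of three distinct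
variables and every variable is a member of exactly three clauses. -/
def CubicMonotone {m : ℕ} {V : Type} [DecidableEq V] [Fintype V]
    (X : Fin m → Fin 3 → V) : Prop :=
  (∀ i : Fin m, Function.Injective (X i)) ∧
  (∀ v : V,
    (Finset.univ.filter (fun p : Fin m × Fin 3 => X p.1 p.2 = v)).card = 3)

/-- M is a one-in-three model of φ: it hits every clause exactly once. -/
def OneInThree {m : ℕ} {V : Type} (X : Fin m → Fin 3 → V) (M : Set V) : Prop :=
  ∀ i : Fin m, ∃! j : Fin 3, X i j ∈ M

/-!
Every interaction in `{nop, inp, used, free}` is non-increasing, and `inp` is the only one that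
changes a value. A region inhibiting `k` at `q` must have `sup q = 0` (otherwise `s₀ --h--> q`
forces `sup s₀ = 1`, where `k` is defined), so `sig k` is undefined at `0`; hence
`sup t_{i,0} = 1`, while `q --h_i--> t_{i,5}` gives `sup t_{i,5} = 0`. Along the path
`t_{i,0} → t_{i,1} → t_{i,2} → t_{i,5}` labelled `X_{i,0}, X_{i,1}, X_{i,2}` exactly one label is
mapped to `inp`, so the variables mapped to `inp` form a one-in-three model.

Conversely, a model `M` yields the `{nop, inp, free}`-region that is `1` on `s₀` and on the gadget
states from which the `M`-variable of the clause is still to be read, with `sig x = inp` for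
`x ∈ M ∪ {k, h}`; it solves the problems that need `sup q = 0`. The same construction for a single
variable, now with `sup q = 1`, separates the states of a gadget, and a few model-independent
regions do the rest. Regions of a smaller type remain regions of a larger one.
-/

theorem IsRegion.mono {S E : Type} {A : TS S E} {τ τ' : Set Interaction} {sup : S → Bool}
    {sig : E → Interaction} (h : IsRegion A τ sup sig) (hτ : τ ⊆ τ') : IsRegion A τ' sup sig :=
  ⟨fun e => hτ (h.1 e), h.2⟩

theorem Feasible.mono {S E : Type} {A : TS S E} {τ τ' : Set Interaction} (h : Feasible A τ)
    (hτ : τ ⊆ τ') : Feasible A τ' := by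
  refine ⟨fun s s' hne => ?_, fun s e he => ?_⟩
  · obtain ⟨sup, sig, hr, hsep⟩ := h.1 s s' hne
    exact ⟨sup, sig, hr.mono hτ, hsep⟩
  · obtain ⟨sup, sig, hr, hinh⟩ := h.2 s e he
    exact ⟨sup, sig, hr.mono hτ, hinh⟩

/-- The target of the `X_{i,a}`-labelled edge leaving `t_{i,j}` in the clause gadget. -/
def gadgetNext : Fin 9 → Fin 3 → Option (Fin 9) :=
  ![![some 1, some 7, some 3], ![none, some 2, some 4], ![none, none, some 5],
    ![some 4, some 6, none], ![none, some 5, none], ![none, none, none],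
    ![some 5, none, none], ![some 2, none, some 6], ![none, none, none]]

/-- `consumed j a` says that `X_{i,a}` has been read on every path from `t_{i,0}` to `t_{i,j}`;
the state `t_{i,8}`, which lies outside the gadget, counts as having read all three. -/
def consumed : Fin 9 → Fin 3 → Bool :=
  ![![false, false, false], ![true, false, false], ![true, true, false],
    ![false, false, true], ![true, false, true], ![true, true, true],
    ![false, true, true], ![false, true, false], ![true, true, true]]

theorem consumed_zero : ∀ a, consumed 0 a = false := by decide

theorem consumed_five : ∀ a, consumed 5 a = true := by decide

theorem exists_consumed_of_ne_zero : ∀ j, j ≠ 0 → ∃ a, consumed j a = true := by decide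

theorem exists_consumed_ne :
    ∀ j j', j ≠ 8 → j' ≠ 8 → j ≠ j' → ∃ a, consumed j a ≠ consumed j' a := by
  decide

theorem gadgetNext_eq_none_iff : ∀ j a, gadgetNext j a = none ↔ j = 8 ∨ consumed j a = true := by
  decide

theorem consumed_of_gadgetNext_eq_some : ∀ j a j', gadgetNext j a = some j' →
    consumed j a = false ∧ consumed j' a = true ∧ j ≠ 8 ∧ j' ≠ 8 ∧
      ∀ b, b ≠ a → consumed j' b = consumed j b := by
  decide

section Gadget

variable {m : ℕ} {V : Type} [DecidableEq V] (X : Fin m → Fin 3 → V)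

theorem exists_gadgetNext_of_gadget_eq_some {i : Fin m} {j : Fin 9} {v : V} {s : PState m}
    (h : gadget X i j v = some s) :
    ∃ a j', gadgetNext j a = some j' ∧ v = X i a ∧ s = .t i j' := by
  unfold gadget at h
  split_ifs at h <;> cases h <;> subst_vars <;> exact ⟨_, _, rfl, rfl, rfl⟩

theorem gadget_self {i : Fin m} (hinj : Function.Injective (X i)) (j : Fin 9) (a : Fin 3) :
    gadget X i j (X i a) = (gadgetNext j a).map (.t i) := by
  fin_cases j <;> fin_cases a <;> simp [gadget, gadgetNext, hinj.eq_iff]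

theorem isRegion_Aphi_of {τ : Set Interaction} {sup : PState m → Bool}
    {sig : PEvent m V → Interaction} (hsig : ∀ e, sig e ∈ τ)
    (hk : sig .k (sup .s0) = some (sup .s1)) (hh : sig .h (sup .s0) = some (sup .q))
    (hr₀ : ∀ i, sig (.r i) (sup .s0) = some (sup (.t i 0)))
    (hr₈ : ∀ i, sig (.r i) (sup .s1) = some (sup (.t i 8)))
    (hhc : ∀ i, sig (.hc i) (sup .q) = some (sup (.t i 5)))
    (hk₀ : ∀ i, sig .k (sup (.t i 0)) = some (sup (.t i 8)))
    (hvar : ∀ i j a j', gadgetNext j a = some j' →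
      sig (.var (X i a)) (sup (.t i j)) = some (sup (.t i j'))) :
    IsRegion (Aphi X) τ sup sig := by
  refine ⟨hsig, ?_⟩
  rintro (_ | _ | _ | ⟨i, j⟩) (_ | _ | i' | i' | v) s' h <;> simp only [Aphi] at h <;>
    try cases h
  all_goals try first | assumption | apply_assumption
  · split_ifs at h with hj
    cases h
    subst hj
    exact hk₀ i
  · obtain ⟨a, j', he, rfl, rfl⟩ := exists_gadgetNext_of_gadget_eq_some X h
    exact hvar i j a j' he

end Gadget

section RegionDefs

variable {m : ℕ} {V : Type} (X : Fin m → Fin 3 → V)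

open Classical in
noncomputable def gadgetSup (S : Set V) (i : Fin m) (j : Fin 9) : Bool :=
  !decide (j = 8 ∨ ∃ a, X i a ∈ S ∧ consumed j a = true)

theorem gadgetSup_zero (S : Set V) (i : Fin m) : gadgetSup X S i 0 = true := by
  simp [gadgetSup, consumed_zero]

open Classical in
theorem gadgetSup_five (S : Set V) (i : Fin m) : gadgetSup X S i 5 = !decide (∃ a, X i a ∈ S) := by
  simp [gadgetSup, consumed_five]

theorem gadgetSup_eq_false {S : Set V} {i : Fin m} {j : Fin 9} {a : Fin 3} (ha : X i a ∈ S)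
    (hj : j = 8 ∨ consumed j a = true) : gadgetSup X S i j = false := by
  simpa [gadgetSup] using hj.imp_right fun hj => ⟨a, ha, hj⟩

theorem gadgetSup_singleton {i : Fin m} (hinj : Function.Injective (X i)) (a : Fin 3) {j : Fin 9}
    (hj : j ≠ 8) : gadgetSup X {X i a} i j = !consumed j a := by
  simp [gadgetSup, hj, hinj.eq_iff]

open Classical in
theorem gadgetSup_step {S : Set V} {i : Fin m} (hS : ∀ a b, X i a ∈ S → X i b ∈ S → a = b)
    {j j' : Fin 9} {a : Fin 3} (he : gadgetNext j a = some j') :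
    (if X i a ∈ S then iInp else iNop) (gadgetSup X S i j) = some (gadgetSup X S i j') := by
  obtain ⟨hja, hj'a, hj, hj', hrest⟩ := consumed_of_gadgetNext_eq_some j a j' he
  by_cases ha : X i a ∈ S
  · have hnot : ∀ b, X i b ∈ S → consumed j b = false := fun b hb => hS a b ha hb ▸ hja
    simpa [gadgetSup, ha, hj, hj', iInp] using ⟨hnot, a, ha, hj'a⟩
  · have hsame : ∀ b, X i b ∈ S → consumed j' b = consumed j b :=
      fun b hb => hrest b (by rintro rfl; exact ha hb)
    simpa [gadgetSup, ha, hj, hj', iNop] using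
      exists_congr fun b => and_congr_right fun hb => by rw [hsame b hb]

def startSup : PState m → Bool
  | .s0 | .s1 => true
  | _ => false

def startSig : PEvent m V → Interaction
  | .k => iNop
  | .h | .r _ => iInp
  | .hc _ | .var _ => iFree

open Classical in
noncomputable def blockSup (I : Set (Fin m)) : PState m → Bool
  | .t i _ => decide (i ∉ I)
  | _ => true

open Classical in
noncomputable def blockSig (I : Set (Fin m)) (W : Set V) : PEvent m V → Interaction
  | .r i | .hc i => if i ∈ I then iInp else iNop
  | .var v => if v ∈ W then iFree else iNop
  | _ => iNop

noncomputable def dropSup (S : Set V) : PState m → Bool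
  | .s1 => false
  | .t i j => gadgetSup X S i j
  | _ => true

open Classical in
noncomputable def dropSig (S : Set V) : PEvent m V → Interaction
  | .k => iInp
  | .hc i => if ∃ a, X i a ∈ S then iInp else iNop
  | .var v => if v ∈ S then iInp else iNop
  | _ => iNop

noncomputable def modelSup (M : Set V) : PState m → Bool
  | .s0 => true
  | .t i j => gadgetSup X M i j
  | _ => false

open Classical in
noncomputable def modelSig (M : Set V) : PEvent m V → Interaction
  | .k | .h => iInp
  | .hc _ => iFree
  | .var v => if v ∈ M then iInp else iNop
  | _ => iNop

end RegionDefs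

section Regions

variable {m : ℕ} {V : Type} [DecidableEq V] (X : Fin m → Fin 3 → V)

theorem isRegion_start :
    IsRegion (Aphi X) {iNop, iInp, iFree} startSup (startSig (V := V)) :=
  isRegion_Aphi_of X (by rintro (_ | _ | _ | _ | _) <;> simp [startSig]) rfl rfl
    (fun _ => rfl) (fun _ => rfl) (fun _ => rfl) (fun _ => rfl) (fun _ _ _ _ _ => rfl)

theorem isRegion_block {I : Set (Fin m)} {W : Set V} (hW : ∀ i a, X i a ∈ W → i ∈ I) :
    IsRegion (Aphi X) {iNop, iInp, iFree} (blockSup I) (blockSig I W) := by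
  refine isRegion_Aphi_of X ?hsig rfl rfl ?_ ?_ ?_ (fun _ => rfl) ?hvar
  case hsig =>
    rintro (_ | _ | i | i | v) <;> simp only [blockSig] <;> try split_ifs
    all_goals simp
  case hvar =>
    intro i j a j' _
    by_cases ha : X i a ∈ W
    · simp [blockSig, blockSup, ha, hW i a ha, iFree]
    · simp [blockSig, blockSup, ha, iNop]
  all_goals intro i; by_cases hi : i ∈ I <;> simp [blockSig, blockSup, hi, iInp, iNop]

theorem isRegion_drop {S : Set V} (hS : ∀ i a b, X i a ∈ S → X i b ∈ S → a = b) :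
    IsRegion (Aphi X) {iNop, iInp, iFree} (dropSup X S) (dropSig X S) := by
  refine isRegion_Aphi_of X ?hsig rfl rfl (fun i => ?_) (fun i => ?_) (fun i => ?hhc) (fun i => ?_)
    (fun i j a j' he => gadgetSup_step X (hS i) he)
  case hsig =>
    rintro (_ | _ | i | i | v) <;> simp only [dropSig] <;> try split_ifs
    all_goals simp
  case hhc =>
    by_cases h : ∃ a, X i a ∈ S <;> simp [dropSig, dropSup, gadgetSup_five, h, iInp, iNop]
  all_goals simp [dropSig, dropSup, gadgetSup, consumed_zero, iNop, iInp]

theorem isRegion_model {M : Set V} (hM : OneInThree X M) :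
    IsRegion (Aphi X) {iNop, iInp, iFree} (modelSup X M) (modelSig M) := by
  refine isRegion_Aphi_of X ?hsig rfl rfl (fun i => ?_) (fun i => ?_) (fun i => ?hhc) (fun i => ?_)
    (fun i j a j' he => gadgetSup_step X (fun a b => (hM i).unique) he)
  case hsig =>
    rintro (_ | _ | i | i | v) <;> simp only [modelSig] <;> try split_ifs
    all_goals simp
  case hhc => simp [modelSig, modelSup, gadgetSup_five, (hM i).exists, iFree]
  all_goals simp [modelSig, modelSup, gadgetSup, consumed_zero, iNop, iInp]

end Regions

section Feasibility

variable {m : ℕ} {V : Type} [DecidableEq V] (X : Fin m → Fin 3 → V)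

theorem isRegion_drop_empty :
    IsRegion (Aphi X) {iNop, iInp, iFree} (dropSup X ∅) (dropSig X ∅) :=
  isRegion_drop X (by simp)

theorem isRegion_drop_singleton (hinj : ∀ i, Function.Injective (X i)) (v : V) :
    IsRegion (Aphi X) {iNop, iInp, iFree} (dropSup X {v}) (dropSig X {v}) :=
  isRegion_drop X fun i _ _ ha hb => hinj i (ha.trans hb.symm)

theorem isRegion_block_univ :
    IsRegion (Aphi X) {iNop, iInp, iFree} (blockSup Set.univ) (blockSig Set.univ Set.univ) :=
  isRegion_block X fun _ _ _ => Set.mem_univ _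

theorem separable_t_t (hinj : ∀ i, Function.Injective (X i)) {i i' : Fin m} {j j' : Fin 9}
    (hne : PState.t i j ≠ .t i' j') :
    Separable (Aphi X) {iNop, iInp, iFree} (.t i j) (.t i' j') := by
  by_cases hi : i = i'
  · subst hi
    have hj : j ≠ j' := fun h => hne (h ▸ rfl)
    by_cases h8 : j = 8 ∨ j' = 8
    · refine ⟨_, _, isRegion_drop_empty X, ?_⟩
      rcases h8 with rfl | rfl <;> simp [dropSup, gadgetSup, hj, hj.symm]
    · obtain ⟨hj8, hj'8⟩ := not_or.mp h8
      obtain ⟨a, ha⟩ := exists_consumed_ne j j' hj8 hj'8 hj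
      refine ⟨_, _, isRegion_drop_singleton X hinj (X i a), ?_⟩
      simpa [dropSup, gadgetSup_singleton X (hinj i) a hj8, gadgetSup_singleton X (hinj i) a hj'8]
        using ha
  · exact ⟨_, _, isRegion_block X (I := {i}) (W := ∅) (by simp), by simp [blockSup, Ne.symm hi]⟩

theorem ssp_Aphi (hinj : ∀ i, Function.Injective (X i)) : SSP (Aphi X) {iNop, iInp, iFree} := by
  intro s s' hne
  rcases s with _ | _ | _ | ⟨i, j⟩ <;> rcases s' with _ | _ | _ | ⟨i', j'⟩
  all_goals first
    | exact absurd rfl hne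
    | exact separable_t_t X hinj hne
    | (refine ⟨_, _, isRegion_start X, ?_⟩; simp [startSup]; done)
    | (refine ⟨_, _, isRegion_block_univ X, ?_⟩; simp [blockSup]; done)
    | (refine ⟨_, _, isRegion_drop_empty X, ?_⟩; simp [dropSup])

theorem inhibitable_k_t (hinj : ∀ i, Function.Injective (X i)) {i : Fin m} {j : Fin 9}
    (hj : j ≠ 0) : Inhibitable (Aphi X) {iNop, iInp, iFree} .k (.t i j) := by
  obtain ⟨a, ha⟩ := exists_consumed_of_ne_zero j hj
  refine ⟨_, _, isRegion_drop_singleton X hinj (X i a), ?_⟩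
  simp [dropSup, gadgetSup_eq_false X (Set.mem_singleton _) (Or.inr ha), dropSig, iInp]

theorem inhibitable_var_t (hinj : ∀ i, Function.Injective (X i)) {i : Fin m} {j : Fin 9} {v : V}
    (h : gadget X i j v = none) : Inhibitable (Aphi X) {iNop, iInp, iFree} (.var v) (.t i j) := by
  by_cases hv : ∃ a, X i a = v
  · obtain ⟨a, rfl⟩ := hv
    have hnext : j = 8 ∨ consumed j a = true := by
      simpa [gadget_self X (hinj i), gadgetNext_eq_none_iff] using h
    refine ⟨_, _, isRegion_drop_singleton X hinj (X i a), ?_⟩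
    simp [dropSup, gadgetSup_eq_false X (Set.mem_singleton _) hnext, dropSig, iInp]
  · refine ⟨_, _, isRegion_block X (I := {i | ∃ a, X i a = v}) (W := {v}) ?_, ?_⟩
    · rintro i a rfl
      exact ⟨a, rfl⟩
    · simp [blockSup, blockSig, hv, iFree]

theorem essp_Aphi (hinj : ∀ i, Function.Injective (X i)) {M : Set V} (hM : OneInThree X M) :
    ESSP (Aphi X) {iNop, iInp, iFree} := by
  intro s e hnone
  cases s <;> cases e
  case t.k i j => exact inhibitable_k_t X hinj (by rintro rfl; simp [Aphi] at hnone)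
  case t.var i j v => exact inhibitable_var_t X hinj hnone
  all_goals first
    | exact absurd hnone (Option.some_ne_none _)
    | exact ⟨_, _, isRegion_start X, rfl⟩
    | (refine ⟨_, _, isRegion_model X hM, ?_⟩; simp [modelSup, modelSig, iInp]; done)
    | (refine ⟨_, _, isRegion_block_univ X, ?_⟩; simp [blockSup, blockSig, iInp, iFree])

theorem feasible_of_oneInThree (hinj : ∀ i, Function.Injective (X i)) {M : Set V}
    (hM : OneInThree X M) : Feasible (Aphi X) {iNop, iInp, iFree} :=
  ⟨ssp_Aphi X hinj, essp_Aphi X hinj hM⟩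

end Feasibility

theorem interaction_step {f : Interaction}
    (hf : f ∈ ({iNop, iInp, iUsed, iFree} : Set Interaction)) {b b' : Bool} (h : f b = some b') :
    f = iInp ∧ b = true ∧ b' = false ∨ f ≠ iInp ∧ b' = b := by
  rcases hf with rfl | rfl | rfl | rfl <;> cases b <;>
    simp_all [iNop, iInp, iUsed, iFree, funext_iff]

theorem eq_false_of_apply_false {f : Interaction}
    (hf : f ∈ ({iNop, iInp, iUsed, iFree} : Set Interaction)) {b : Bool} (h : f false = some b) :
    b = false := by
  rcases interaction_step hf h with ⟨-, h, -⟩ | ⟨-, rfl⟩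
  · cases h
  · rfl

/-- Going from `1` to `0` in three steps, the value drops exactly once, and only `inp` drops. -/
theorem existsUnique_eq_iInp {f : Fin 3 → Interaction}
    (hf : ∀ a, f a ∈ ({iNop, iInp, iUsed, iFree} : Set Interaction)) {b₁ b₂ : Bool}
    (h₀ : f 0 true = some b₁) (h₁ : f 1 b₁ = some b₂) (h₂ : f 2 b₂ = some false) :
    ∃! a, f a = iInp := by
  rcases interaction_step (hf 0) h₀ with ⟨e₀, -, rfl⟩ | ⟨n₀, rfl⟩ <;>
    rcases interaction_step (hf 1) h₁ with ⟨e₁, h₁, rfl⟩ | ⟨n₁, rfl⟩ <;>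
    rcases interaction_step (hf 2) h₂ with ⟨e₂, h₂, -⟩ | ⟨n₂, h₂⟩
  all_goals simp_all [ExistsUnique, Fin.forall_fin_succ]

theorem exists_oneInThree_of_inhibitable {m : ℕ} {V : Type} [DecidableEq V]
    {X : Fin m → Fin 3 → V} {τ : Set Interaction} (hτ : τ ⊆ {iNop, iInp, iUsed, iFree})
    (h : Inhibitable (Aphi X) τ .k .q) : ∃ M : Set V, OneInThree X M := by
  obtain ⟨sup, sig, ⟨hsig, hreg⟩, hk⟩ := h
  have hτsig : ∀ e, sig e ∈ ({iNop, iInp, iUsed, iFree} : Set Interaction) := fun e => hτ (hsig e)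
  have hq : sup .q = false := by
    by_contra hq
    have hs0 : sup .s0 = sup .q := by
      rcases interaction_step (hτsig .h) (hreg .s0 .h .q rfl) with ⟨-, -, h⟩ | ⟨-, h⟩
      · exact absurd h hq
      · exact h.symm
    have hk₀ := hreg .s0 .k .s1 rfl
    rw [hs0, hk] at hk₀
    cases hk₀
  rw [hq] at hk
  have ht₀ : ∀ i, sup (.t i 0) = true := by
    intro i
    by_contra h
    have hk₀ := hreg (.t i 0) .k (.t i 8) rfl
    rw [Bool.eq_false_iff.mpr h, hk] at hk₀
    cases hk₀
  have ht₅ : ∀ i, sup (.t i 5) = false := fun i =>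
    eq_false_of_apply_false (hτsig _) (hq ▸ hreg .q (.hc i) (.t i 5) rfl)
  refine ⟨{v | sig (.var v) = iInp}, fun i =>
    existsUnique_eq_iInp (b₁ := sup (.t i 1)) (b₂ := sup (.t i 2)) (fun a => hτsig _) ?_ ?_ ?_⟩
  · rw [← ht₀ i]
    exact hreg _ _ _ (by simp [Aphi, gadget])
  · exact hreg _ _ _ (by simp [Aphi, gadget])
  · rw [← ht₅ i]
    exact hreg _ _ _ (by simp [Aphi, gadget])

/-- A_φ is τ-feasible iff φ has a one-in-three model,
for τ = {nop, inp, free} or τ = {nop, inp, used, free}. -/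
theorem feasible_iff_model {m : ℕ} {V : Type} [DecidableEq V] [Fintype V]
    (X : Fin m → Fin 3 → V) (hcubic : CubicMonotone X)
    (τ : Set Interaction)
    (hτ : τ = {iNop, iInp, iFree} ∨ τ = {iNop, iInp, iUsed, iFree}) :
    Feasible (Aphi X) τ ↔ ∃ M : Set V, OneInThree X M := by
  obtain ⟨hτ₀, hτ₁⟩ :
      ({iNop, iInp, iFree} : Set Interaction) ⊆ τ ∧ τ ⊆ {iNop, iInp, iUsed, iFree} := by
    rcases hτ with rfl | rfl <;> constructor <;> intro f <;> simp <;> tauto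
  constructor
  · exact fun hfeas => exists_oneInThree_of_inhibitable hτ₁ (hfeas.2 .q .k rfl)
  · rintro ⟨M, hM⟩
    exact (feasible_of_oneInThree X hcubic.1 hM).mono hτ₀
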